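/- arXiv:2511.08198 — 3 statements merged into one kernel-verified Lean document; each statement's English description precedes it below -/
import Mathlib

section
/- Let A ∈ M_{m×n}(ℝ), l, u ∈ ℝⁿ with l ≤ u componentwise. If the system A·V = 0, l ≤ V ≤ u is infeasible, then there exists w ∈ ℝᵐ such that, setting c = Aᵀw, Σ_{cᵢ>0} cᵢ·u(xᵢ) + Σ_{cᵢ<0} cᵢ·l(xᵢ) < 0. (Completeness direction of the Farkas lemma variant.) -/
/-!
The image `K = A '' [l, u]` of the box is compact and convex, and infeasibility says `0 ∉ K`,
so a hyperplane `w` strictly separates `0` from `K`. The sum in the certificate is the value of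
`c = Aᵀw` at the vertex of the box that maximises `c ⬝ᵥ V`, and `c ⬝ᵥ V = w ⬝ᵥ A V < 0`.
-/

open Matrix

theorem exists_dotProduct_neg_of_zero_notMem {ι : Type*} [Fintype ι] {K : Set (ι → ℝ)}
    (hconv : Convex ℝ K) (hclosed : IsClosed K) (h0 : 0 ∉ K) :
    ∃ w : ι → ℝ, ∀ x ∈ K, w ⬝ᵥ x < 0 := by
  classical
  obtain ⟨f, s, hfK, hs⟩ := geometric_hahn_banach_closed_point hconv hclosed h0
  refine ⟨(dotProductEquiv ℝ ι).symm f.toLinearMap, fun x hx => ?_⟩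
  have hf : (dotProductEquiv ℝ ι).symm f.toLinearMap ⬝ᵥ x = f x :=
    LinearMap.congr_fun ((dotProductEquiv ℝ ι).apply_symm_apply f.toLinearMap) x
  rw [hf]
  exact (hfK x hx).trans (by simpa using hs)

theorem exists_mem_Icc_dotProduct_eq_sum_ite {ι : Type*} [Fintype ι] (c l u : ι → ℝ)
    (hlu : l ≤ u) :
    ∃ V ∈ Set.Icc l u, c ⬝ᵥ V =
      ∑ i, if 0 < c i then c i * u i else if c i < 0 then c i * l i else 0 := by
  refine ⟨fun i => if 0 < c i then u i else l i, ⟨fun i => ?_, fun i => ?_⟩, ?_⟩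
  · dsimp only; split_ifs <;> simp [hlu i]
  · dsimp only; split_ifs <;> simp [hlu i]
  · refine Finset.sum_congr rfl fun i _ => ?_
    rcases lt_trichotomy (c i) 0 with h | h | h
    · simp [h, h.not_gt]
    · simp [h]
    · simp [h]

/-- Completeness direction of the Farkas lemma variant: if the system
    `A·V = 0, l ≤ V ≤ u` (with `l ≤ u`) is infeasible, then there exists a
    Farkas certificate `w`. -/
theorem farkas_certificate_complete {m n : ℕ}
    (A : Matrix (Fin m) (Fin n) ℝ) (l u : Fin n → ℝ)
    (hlu : ∀ i, l i ≤ u i)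
    (hinfeas : ¬ ∃ V : Fin n → ℝ,
      A.mulVec V = 0 ∧ (∀ i, l i ≤ V i) ∧ (∀ i, V i ≤ u i)) :
    ∃ w : Fin m → ℝ,
      (∑ i : Fin n,
        if 0 < (Matrix.vecMul w A) i then (Matrix.vecMul w A) i * u i
        else if (Matrix.vecMul w A) i < 0 then (Matrix.vecMul w A) i * l i
        else 0) < 0 := by
  have h0 : (0 : Fin m → ℝ) ∉ A.mulVecLin '' Set.Icc l u := by
    rintro ⟨V, ⟨hlV, hVu⟩, hAV⟩
    exact hinfeas ⟨V, hAV, hlV, hVu⟩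
  obtain ⟨w, hw⟩ := exists_dotProduct_neg_of_zero_notMem
    ((convex_Icc l u).linear_image A.mulVecLin)
    (isCompact_Icc.image A.mulVecLin.continuous_of_finiteDimensional).isClosed h0
  obtain ⟨V, hV, hsum⟩ := exists_mem_Icc_dotProduct_eq_sum_ite (vecMul w A) l u hlu
  refine ⟨w, ?_⟩
  rw [← hsum, ← dotProduct_mulVec]
  exact hw _ ⟨V, hV, rfl⟩
end

section
/- Let c ∈ ℝⁿ, bound vectors l_input ≤ l ≤ u ≤ u_input, and suppose Δ = Σ_{cᵢ>0} cᵢ·u(xᵢ) + Σ_{cᵢ<0} cᵢ·l(xᵢ) < 0. Let S ⊆ {1,…,n} be a set of indices such that Σ_{i∈S} |cont(i)| ≤ |Δ|, where cont(i) is the (nonpositive) contribution of index i. Then replacing, for each i ∈ S, the tightened bound by the input bound (i.e., using u_input(xᵢ) in place of u(xᵢ) if cᵢ > 0, and l_input(xᵢ) in place of l(xᵢ) if cᵢ < 0) yields a value Δ' ≤ 0; moreover Δ' < 0 if the inequality Σ_{i∈S} |cont(i)| ≤ |Δ| is strict. -/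
/-!
The `i`-th term of `Δ` is `boxBound cᵢ (l i) (u i)`, the maximum of `cᵢ xᵢ` over `l i ≤ xᵢ ≤ u i`.
Widening that interval to `[linput i, uinput i]` raises the term by exactly `|cont i|`, so
`Δ' = Δ + ∑_{i ∈ S} |cont i|`. As `Δ < 0`, this is at most `Δ + |Δ| = 0`, and strictly below it
when the hypothesis on `S` is strict.
-/

theorem Finset.sum_ite_mem_eq_add_sum_sub {ι M : Type*} [AddCommGroup M] [Fintype ι]
    [DecidableEq ι] (S : Finset ι) (f g : ι → M) :
    ∑ i, (if i ∈ S then f i else g i) = ∑ i, g i + ∑ i ∈ S, (f i - g i) := by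
  have hsplit : ∀ i, (if i ∈ S then f i else g i) = g i + if i ∈ S then f i - g i else 0 := by
    intro i
    split_ifs <;> abel
  simp only [hsplit, Finset.sum_add_distrib, Finset.sum_ite_mem, Finset.univ_inter]

section BoxBound

variable {R : Type*} [CommRing R] [LinearOrder R] [IsStrictOrderedRing R]

def boxBound (c lo hi : R) : R :=
  if 0 < c then c * hi else if c < 0 then c * lo else 0

theorem abs_boxBound_sub_sub_of_le {c lo hi lo' hi' : R} (hlo : lo' ≤ lo) (hhi : hi ≤ hi') :
    |boxBound c (lo' - lo) (hi - hi')| = boxBound c lo' hi' - boxBound c lo hi := by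
  unfold boxBound
  split_ifs with hpos hneg
  · rw [abs_of_nonpos (mul_nonpos_of_nonneg_of_nonpos hpos.le (sub_nonpos.2 hhi))]
    ring
  · rw [abs_of_nonneg (mul_nonneg_of_nonpos_of_nonpos hneg.le (sub_nonpos.2 hlo))]
    ring
  · simp

theorem sum_boxBound_relax {ι : Type*} [Fintype ι] [DecidableEq ι] (c lo hi lo' hi' : ι → R)
    (S : Finset ι) (hlo : ∀ i, lo' i ≤ lo i) (hhi : ∀ i, hi i ≤ hi' i) :
    ∑ i, boxBound (c i) (if i ∈ S then lo' i else lo i) (if i ∈ S then hi' i else hi i) =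
      ∑ i, boxBound (c i) (lo i) (hi i) +
        ∑ i ∈ S, |boxBound (c i) (lo' i - lo i) (hi i - hi' i)| := by
  simp only [abs_boxBound_sub_sub_of_le (hlo _) (hhi _), ← Finset.sum_ite_mem_eq_add_sum_sub,
    apply_ite₂]

end BoxBound

theorem relax_bounds_preserves_certificate_general {n : ℕ}
    (c linput l u uinput : Fin n → ℝ)
    (h1 : ∀ i, linput i ≤ l i)
    (h3 : ∀ i, u i ≤ uinput i)
    (hΔ : (∑ i : Fin n,
        if 0 < c i then c i * u i
        else if c i < 0 then c i * l i
        else 0) < 0)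
    (S : Finset (Fin n))
    (hS : (∑ i ∈ S,
        |if 0 < c i then c i * (u i - uinput i)
         else if c i < 0 then c i * (linput i - l i)
         else 0|) ≤
      |∑ i : Fin n,
        if 0 < c i then c i * u i
        else if c i < 0 then c i * l i
        else 0|) :
    ((∑ i : Fin n,
        if 0 < c i then c i * (if i ∈ S then uinput i else u i)
        else if c i < 0 then c i * (if i ∈ S then linput i else l i)
        else 0) ≤ 0) ∧
    (((∑ i ∈ S,
        |if 0 < c i then c i * (u i - uinput i)
         else if c i < 0 then c i * (linput i - l i)
         else 0|) <
      |∑ i : Fin n,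
        if 0 < c i then c i * u i
        else if c i < 0 then c i * l i
        else 0|) →
      (∑ i : Fin n,
        if 0 < c i then c i * (if i ∈ S then uinput i else u i)
        else if c i < 0 then c i * (if i ∈ S then linput i else l i)
        else 0) < 0) := by
  simp only [← boxBound.eq_1] at hΔ hS ⊢
  rw [sum_boxBound_relax c l u linput uinput S h1 h3]
  rw [abs_of_neg hΔ] at hS ⊢
  exact ⟨by linarith, fun hlt => by linarith⟩

/-- Relaxing, for indices in `S`, the tightened bounds back to the input bounds
    keeps the certificate value nonpositive provided the total removed
    contribution fits within the slack `|Δ|`; strictly negative if the fit is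
    strict. -/
theorem relax_bounds_preserves_certificate {n : ℕ}
    (c linput l u uinput : Fin n → ℝ)
    (h1 : ∀ i, linput i ≤ l i) (h2 : ∀ i, l i ≤ u i)
    (h3 : ∀ i, u i ≤ uinput i)
    (hΔ : (∑ i : Fin n,
        if 0 < c i then c i * u i
        else if c i < 0 then c i * l i
        else 0) < 0)
    (S : Finset (Fin n))
    (hS : (∑ i ∈ S,
        |if 0 < c i then c i * (u i - uinput i)
         else if c i < 0 then c i * (linput i - l i)
         else 0|) ≤
      |∑ i : Fin n,
        if 0 < c i then c i * u i
        else if c i < 0 then c i * l i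
        else 0|) :
    ((∑ i : Fin n,
        if 0 < c i then c i * (if i ∈ S then uinput i else u i)
        else if c i < 0 then c i * (if i ∈ S then linput i else l i)
        else 0) ≤ 0) ∧
    (((∑ i ∈ S,
        |if 0 < c i then c i * (u i - uinput i)
         else if c i < 0 then c i * (linput i - l i)
         else 0|) <
      |∑ i : Fin n,
        if 0 < c i then c i * u i
        else if c i < 0 then c i * l i
        else 0|) →
      (∑ i : Fin n,
        if 0 < c i then c i * (if i ∈ S then uinput i else u i)
        else if c i < 0 then c i * (if i ∈ S then linput i else l i)
        else 0) < 0) :=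
  relax_bounds_preserves_certificate_general c linput l u uinput h1 h3 hΔ S hS
end

section
/- Exchange lemma: let δ : I → ℝ≥0 be weights on a finite index set, B ≥ 0, and let D, D' ⊆ I be two subsets with Σ_{i∉D} δᵢ ≤ B and Σ_{i∉D'} δᵢ ≤ B (i.e., both complements are removable within the budget). Suppose ℓ ∈ D \ D' attains the minimal weight in D \ D' and ℓ' ∈ D' \ D attains the minimal weight in D' \ D, and δ_{ℓ'} ≤ δ_ℓ. Then the set D'' = (D' \ {ℓ'}) ∪ {ℓ} also satisfies Σ_{i∉D''} δᵢ ≤ B and |D''| = |D'|. -/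
namespace Finset

variable {ι M : Type*} [DecidableEq ι]

theorem sum_sdiff_insert_erase_add [AddCommMonoid M] {I S : Finset ι} {a b : ι}
    (haI : a ∈ I) (haS : a ∉ S) (hbI : b ∈ I) (hbS : b ∈ S) (f : ι → M) :
    (∑ i ∈ I \ insert a (S.erase b), f i) + f a = (∑ i ∈ I \ S, f i) + f b := by
  have hbS' : b ∉ I \ S := fun h => (mem_sdiff.mp h).2 hbS
  have ha : a ∈ insert b (I \ S) := mem_insert_of_mem (mem_sdiff.mpr ⟨haI, haS⟩)
  rw [sdiff_insert, sdiff_erase hbI, sum_erase_add _ _ ha, sum_insert hbS', add_comm]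

theorem card_insert_erase_of_notMem {S : Finset ι} {a b : ι} (ha : a ∉ S) (hb : b ∈ S) :
    (insert a (S.erase b)).card = S.card := by
  rw [card_insert_of_notMem fun h => ha (mem_of_mem_erase h), card_erase_add_one hb]

end Finset

theorem exchange_lemma_general {ι : Type*} [DecidableEq ι]
    (I : Finset ι) (δ : ι → ℝ) (B : ℝ)
    (D D' : Finset ι) (hD : D ⊆ I) (hD' : D' ⊆ I)
    (hfeasD' : (∑ i ∈ I \ D', δ i) ≤ B)
    (ℓ ℓ' : ι)
    (hℓ : ℓ ∈ D \ D')
    (hℓ' : ℓ' ∈ D' \ D)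
    (hle : δ ℓ' ≤ δ ℓ) :
    (∑ i ∈ I \ (insert ℓ (D'.erase ℓ')), δ i) ≤ B ∧
      (insert ℓ (D'.erase ℓ')).card = D'.card := by
  obtain ⟨hℓD, hℓD'⟩ := Finset.mem_sdiff.mp hℓ
  have hℓ'D' : ℓ' ∈ D' := (Finset.mem_sdiff.mp hℓ').1
  have hswap := Finset.sum_sdiff_insert_erase_add (hD hℓD) hℓD' (hD' hℓ'D') hℓ'D' δ
  exact ⟨by linarith, Finset.card_insert_erase_of_notMem hℓD' hℓ'D'⟩

/-- Exchange lemma: swapping the minimal-weight kept element `ℓ'` of `D' \ D`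
    for the minimal-weight kept element `ℓ` of `D \ D'`, of no smaller weight,
    preserves feasibility (complement removable within the budget) and
    cardinality. -/
theorem exchange_lemma {ι : Type*} [DecidableEq ι]
    (I : Finset ι) (δ : ι → ℝ) (B : ℝ)
    (hnonneg : ∀ i ∈ I, 0 ≤ δ i) (hB : 0 ≤ B)
    (D D' : Finset ι) (hD : D ⊆ I) (hD' : D' ⊆ I)
    (hfeasD : (∑ i ∈ I \ D, δ i) ≤ B)
    (hfeasD' : (∑ i ∈ I \ D', δ i) ≤ B)
    (ℓ ℓ' : ι)
    (hℓ : ℓ ∈ D \ D') (hℓmin : ∀ i ∈ D \ D', δ ℓ ≤ δ i)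
    (hℓ' : ℓ' ∈ D' \ D) (hℓ'min : ∀ i ∈ D' \ D, δ ℓ' ≤ δ i)
    (hle : δ ℓ' ≤ δ ℓ) :
    (∑ i ∈ I \ (insert ℓ (D'.erase ℓ')), δ i) ≤ B ∧
      (insert ℓ (D'.erase ℓ')).card = D'.card :=
  exchange_lemma_general I δ B D D' hD hD' hfeasD' ℓ ℓ' hℓ hℓ' hle
end
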